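/- Let G be a semigroup with an element θ such that x*x = x for every x ∈ G and x*y = θ whenever x, y ∈ G with x ≠ y (for |G| = n+1 this is the semilattice K_{1,n}, the complete bipartite graph semilattice). Then a partition 𝒮 of G into nonempty finite blocks is a Schur ring over G if and only if {θ} is a block of 𝒮. -/

import Mathlib

open scoped Pointwise

/-- The simple quantity `[X] = ∑_{x ∈ X} x` in the semigroup algebra `MonoidAlgebra ℚ G`. -/
noncomputable def simpleQty {G : Type*} [Mul G] (X : Finset G) : MonoidAlgebra ℚ G :=
  ∑ x ∈ X, MonoidAlgebra.single x (1 : ℚ)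

/-- A partition of `G` into nonempty finite blocks. -/
def IsPartition {G : Type*} (S : Set (Set G)) : Prop :=
  (∀ X ∈ S, X.Nonempty ∧ X.Finite) ∧ ∀ x : G, ∃! X, X ∈ S ∧ x ∈ X

/-- The ℚ-linear span of the simple quantities of the blocks of `S`. -/
noncomputable def schurSpan {G : Type*} [Mul G] (S : Set (Set G)) :
    Submodule ℚ (MonoidAlgebra ℚ G) :=
  Submodule.span ℚ { z | ∃ X ∈ S, ∃ hX : X.Finite, z = simpleQty hX.toFinset }

/-- A Schur ring over the semigroup `G`. -/
def IsSchurRing {G : Type*} [Semigroup G] (S : Set (Set G)) : Prop :=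
  IsPartition S ∧ ∀ X ∈ S, ∀ Y ∈ S, ∀ (hX : X.Finite) (hY : Y.Finite),
    simpleQty hX.toFinset * simpleQty hY.toFinset ∈ schurSpan S

/-- `A` is an `S`-subset: a union of blocks of `S`. -/
def IsSUnion {G : Type*} (S : Set (Set G)) (A : Set G) : Prop :=
  ∀ X ∈ S, X ⊆ A ∨ X ∩ A = ∅

lemma simpleQty_apply {G : Type*} [Mul G] [DecidableEq G] (F : Finset G) (g : G) :
    (simpleQty F).coeff g = if g ∈ F then (1:ℚ) else 0 := by
  rw [simpleQty, MonoidAlgebra.coeff_sum, Finset.sum_apply']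
  simp [MonoidAlgebra.coeff_single, Finsupp.single_apply]

lemma simpleQty_mul {G : Type*} [Semigroup G] (F H : Finset G) :
    simpleQty F * simpleQty H = ∑ a ∈ F, ∑ b ∈ H, MonoidAlgebra.single (a * b) (1:ℚ) := by
  rw [simpleQty, simpleQty, Finset.sum_mul_sum]
  simp [MonoidAlgebra.single_mul_single]

/-- Elements of the span are constant on each block. -/
lemma span_const {G : Type*} [Mul G] {S : Set (Set G)} (hS : IsPartition S)
    {z : MonoidAlgebra ℚ G} (hz : z ∈ schurSpan S) {X : Set G} (hXS : X ∈ S)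
    {a b : G} (ha : a ∈ X) (hb : b ∈ X) : z.coeff a = z.coeff b := by
  classical
  induction hz using Submodule.span_induction with
  | mem w hw =>
    obtain ⟨C, hCS, hC, rfl⟩ := hw
    rw [simpleQty_apply, simpleQty_apply]
    have : a ∈ hC.toFinset ↔ b ∈ hC.toFinset := by
      simp only [Set.Finite.mem_toFinset]
      constructor
      · intro haC
        have hu := hS.2 a
        have : C = X := hu.unique ⟨hCS, haC⟩ ⟨hXS, ha⟩
        subst this; exact hb
      · intro hbC
        have hu := hS.2 b
        have : C = X := hu.unique ⟨hCS, hbC⟩ ⟨hXS, hb⟩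
        subst this; exact ha
    simp [this]
  | zero => simp
  | add u v _ _ hu hv => rw [MonoidAlgebra.coeff_add, Finsupp.add_apply, Finsupp.add_apply, hu, hv]
  | smul c u _ hu => rw [MonoidAlgebra.coeff_smul_apply, MonoidAlgebra.coeff_smul_apply, hu]

/-- over the semilattice `K_{1,n}` (every element idempotent, distinct
products equal `θ`), a partition is a Schur ring iff `{θ}` is a block. -/
theorem bipartite_semilattice_schur {G : Type*} [Semigroup G] (θ : G)
    (hidem : ∀ x : G, x * x = x)
    (hzero : ∀ x y : G, x ≠ y → x * y = θ)
    (S : Set (Set G)) (hS : IsPartition S) :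
    IsSchurRing S ↔ ({θ} : Set G) ∈ S := by
  classical
  constructor
  · rintro ⟨-, hmul⟩
    -- let X be the block containing θ
    obtain ⟨X, ⟨hXS, hθX⟩, -⟩ := hS.2 θ
    have hXfin : X.Finite := (hS.1 X hXS).2
    by_contra hnot
    -- X has an element x ≠ θ
    have hXne : X ≠ {θ} := fun h => hnot (h ▸ hXS)
    obtain ⟨x, hxX, hxθ⟩ : ∃ x ∈ X, x ≠ θ := by
      by_contra h
      push_neg at h
      exact hXne (Set.eq_singleton_iff_unique_mem.2 ⟨hθX, h⟩)
    set F := hXfin.toFinset with hF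
    have hz := hmul X hXS X hXS hXfin hXfin
    have hconst := span_const hS hz hXS hθX hxX
    rw [simpleQty_mul] at hconst
    have happ : ∀ g : G, (∑ a ∈ F, ∑ b ∈ F, MonoidAlgebra.single (a * b) (1:ℚ)).coeff g
        = ((F ×ˢ F).filter (fun p => p.1 * p.2 = g)).card := by
      intro g
      rw [MonoidAlgebra.coeff_sum, Finset.sum_apply']
      have : ∀ a ∈ F, (∑ b ∈ F, MonoidAlgebra.single (a * b) (1:ℚ)).coeff g
          = ∑ b ∈ F, if a * b = g then (1:ℚ) else 0 := by
        intro a _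
        rw [MonoidAlgebra.coeff_sum, Finset.sum_apply']
        refine Finset.sum_congr rfl fun b _ => ?_
        simp [MonoidAlgebra.coeff_single, Finsupp.single_apply, eq_comm]
      rw [Finset.sum_congr rfl this, ← Finset.sum_product']
      simp [Finset.sum_boole]
    have hθF : θ ∈ F := by simp [hF, hXfin.mem_toFinset, hθX]
    have hxF : x ∈ F := by simp [hF, hXfin.mem_toFinset, hxX]
    -- coefficient at x is 1
    have hcx : ((F ×ˢ F).filter (fun p => p.1 * p.2 = x)).card = 1 := by
      have : (F ×ˢ F).filter (fun p => p.1 * p.2 = x) = {(x, x)} := by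
        ext ⟨a, b⟩
        simp only [Finset.mem_filter, Finset.mem_product, Finset.mem_singleton, Prod.mk.injEq]
        constructor
        · rintro ⟨⟨-, -⟩, hab⟩
          by_cases h : a = b
          · subst h; rw [hidem] at hab; exact ⟨hab, hab⟩
          · exact absurd (hab.symm.trans (hzero a b h)) hxθ
        · rintro ⟨rfl, rfl⟩; exact ⟨⟨hxF, hxF⟩, hidem _⟩
      rw [this, Finset.card_singleton]
    -- coefficient at θ is at least 2
    have hcθ : 2 ≤ ((F ×ˢ F).filter (fun p => p.1 * p.2 = θ)).card := by
      apply Finset.one_lt_card.2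
      refine ⟨(θ, x), ?_, (x, θ), ?_, ?_⟩
      · simp [Finset.mem_filter, hθF, hxF, hzero θ x (Ne.symm hxθ)]
      · simp [Finset.mem_filter, hθF, hxF, hzero x θ hxθ]
      · simp [Prod.ext_iff]; intro h; exact absurd h.symm hxθ
    rw [happ θ, happ x, hcx] at hconst
    have : ((F ×ˢ F).filter (fun p => p.1 * p.2 = θ)).card = 1 := by
      exact_mod_cast hconst
    omega
  · intro hθS
    refine ⟨hS, fun X hXS Y hYS hX hY => ?_⟩
    set F := hX.toFinset
    set H := hY.toFinset
    have hT : MonoidAlgebra.single θ (1:ℚ) ∈ schurSpan S := by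
      apply Submodule.subset_span
      refine ⟨{θ}, hθS, Set.finite_singleton θ, ?_⟩
      simp [simpleQty]
    rw [simpleQty_mul]
    by_cases hXY : X = Y
    · subst hXY
      have hFH : H = F := by simp [F, H]
      rw [hFH]
      have hsplit : (∑ a ∈ F, ∑ b ∈ F, MonoidAlgebra.single (a * b) (1:ℚ))
          = simpleQty F + ∑ a ∈ F, ((F.erase a).card • MonoidAlgebra.single θ (1:ℚ)) := by
        rw [simpleQty, ← Finset.sum_add_distrib]
        refine Finset.sum_congr rfl fun a haF => ?_
        rw [← Finset.add_sum_erase _ _ haF, hidem a]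
        congr 1
        have h2 : ∀ b ∈ F.erase a, MonoidAlgebra.single (a * b) (1:ℚ)
            = MonoidAlgebra.single θ 1 := fun b hb => by
          rw [hzero a b (Finset.ne_of_mem_erase hb).symm]
        rw [Finset.sum_congr rfl h2, Finset.sum_const]
      rw [hsplit]
      refine Submodule.add_mem _ ?_ ?_
      · exact Submodule.subset_span ⟨X, hXS, hX, rfl⟩
      · exact Submodule.sum_mem _ fun a _ => nsmul_mem hT _
    · have hdisj : ∀ a ∈ F, ∀ b ∈ H, a ≠ b := by
        intro a haF b hbH hab
        subst hab
        have haX : a ∈ X := hX.mem_toFinset.1 haF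
        have haY : a ∈ Y := hY.mem_toFinset.1 hbH
        exact hXY ((hS.2 a).unique ⟨hXS, haX⟩ ⟨hYS, haY⟩)
      have h2 : (∑ a ∈ F, ∑ b ∈ H, MonoidAlgebra.single (a * b) (1:ℚ))
          = ∑ _a ∈ F, ∑ _b ∈ H, MonoidAlgebra.single θ (1:ℚ) := by
        refine Finset.sum_congr rfl fun a haF => Finset.sum_congr rfl fun b hbH => ?_
        rw [hzero a b (hdisj a haF b hbH)]
      have h3 : (∑ _a ∈ F, ∑ _b ∈ H, MonoidAlgebra.single θ (1:ℚ))
          = (F.card * H.card) • MonoidAlgebra.single θ (1:ℚ) := by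
        simp [Finset.sum_const, mul_smul]
      rw [h2, h3]
      exact nsmul_mem hT _
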